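/- For every integer L ≥ 0 and every natural number n ≥ 0, S_L(n+3,n) = (n(n+1)(n+2)(n+3)/48) · ((n+3)!/3)^L · ( n²(3/8)^L + n(1/4^{L−1} − 3^{L+1}/8^L) + (2 + 2·3^L)/8^L − 1/4^{L−1} ), where the right-hand side is computed in ℚ. -/

import Mathlib

open PowerSeries Finset

/-- The series `₀F_L(1,…,1;z) − 1 = ∑_{k≥1} z^k/(k!)^{L+1}` over `ℚ`. -/
noncomputable def hypFsub1 (L : ℕ) : PowerSeries ℚ :=
  PowerSeries.mk fun k => if k = 0 then 0 else 1 / (k.factorial : ℚ) ^ (L + 1)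

/-- The exponential `exp f = ∑_{l≥0} f^l / l!` of a power series `f` with zero
constant term (for such `f`, `coeff n (f^l) = 0` for `l > n`, so the finite sum
below is the full exponential series). -/
noncomputable def expPS (f : PowerSeries ℚ) : PowerSeries ℚ :=
  PowerSeries.mk fun n =>
    ∑ l ∈ Finset.range (n + 1), PowerSeries.coeff n (f ^ l) / (l.factorial : ℚ)

/-- `b_L(n) = (n!)^{L+1} · [z^n] exp(₀F_L(z) − 1)`. -/
noncomputable def bL (L n : ℕ) : ℚ :=
  (n.factorial : ℚ) ^ (L + 1) * PowerSeries.coeff n (expPS (hypFsub1 L))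

/-- `S_L(n,l) = ((n!)^{L+1}/l!) · [z^n] (₀F_L(z) − 1)^l`, the generalized
Stirling numbers of the second kind of type `L`. -/
noncomputable def SL (L n l : ℕ) : ℚ :=
  (n.factorial : ℚ) ^ (L + 1) / (l.factorial : ℚ) *
    PowerSeries.coeff n (hypFsub1 L ^ l)

/-- The series `∑_{k≥p+1} z^k/(k!)^{L+1}` over `ℚ`. -/
noncomputable def hypFtail (L p : ℕ) : PowerSeries ℚ :=
  PowerSeries.mk fun k => if k ≤ p then 0 else 1 / (k.factorial : ℚ) ^ (L + 1)

/-- `b_L(p,n) = (n!)^{L+1} · [z^n] exp(∑_{k≥p+1} z^k/(k!)^{L+1})`. -/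
noncomputable def bLp (L p n : ℕ) : ℚ :=
  (n.factorial : ℚ) ^ (L + 1) * PowerSeries.coeff n (expPS (hypFtail L p))

/-!
Since `₀F_L − 1 = z·u` with `u = ∑_{k≥0} z^k/((k+1)!)^{L+1}` and `u(0) = 1`, the coefficient of
`z^{n+3}` in `(₀F_L − 1)^n` is the coefficient of `z^3` in `u^n`. For any series with constant
term `1` this is `n u₃ + n(n−1) u₁u₂ + C(n,3) u₁³`, by induction on `n`. With
`u_k = 1/((k+1)!)^{L+1}` the closed form becomes a rational identity in `2^L` and `3^L`.
-/

namespace PowerSeries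

variable {R : Type*} [CommRing R]

lemma coeff_pow_succ (u : R⟦X⟧) (n k : ℕ) :
    coeff k (u ^ (n + 1)) = ∑ i ∈ range (k + 1), coeff i (u ^ n) * coeff (k - i) u := by
  rw [pow_succ, coeff_mul,
    Nat.sum_antidiagonal_eq_sum_range_succ (fun i j => coeff i (u ^ n) * coeff j u)]

section ConstantCoeffOne

variable {u : R⟦X⟧}

lemma coeff_one_pow_of_constantCoeff_eq_one (hu : constantCoeff u = 1) (n : ℕ) :
    coeff 1 (u ^ n) = n * coeff 1 u := by
  induction n with
  | zero => simp
  | succ n ih =>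
    simp only [coeff_pow_succ, Nat.reduceAdd, sum_range_succ, range_one, sum_singleton,
      coeff_zero_eq_constantCoeff, map_pow, hu, one_pow, tsub_zero, one_mul, ih, tsub_self, mul_one,
      Nat.cast_add, Nat.cast_one]
    ring

lemma coeff_two_pow_of_constantCoeff_eq_one (hu : constantCoeff u = 1) (n : ℕ) :
    coeff 2 (u ^ n) = n * coeff 2 u + n.choose 2 * coeff 1 u ^ 2 := by
  induction n with
  | zero => simp
  | succ n ih =>
    simp only [coeff_pow_succ, Nat.reduceAdd, sum_range_succ, range_one, sum_singleton,
      coeff_zero_eq_constantCoeff, map_pow, hu, one_pow, tsub_zero, one_mul,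
      coeff_one_pow_of_constantCoeff_eq_one hu, Nat.add_one_sub_one, ih, tsub_self, mul_one,
      Nat.cast_add, Nat.cast_one, Nat.choose_succ_succ', Nat.choose_one_right]
    ring

lemma coeff_three_pow_of_constantCoeff_eq_one (hu : constantCoeff u = 1) (n : ℕ) :
    coeff 3 (u ^ n) =
      n * coeff 3 u + 2 * n.choose 2 * coeff 1 u * coeff 2 u + n.choose 3 * coeff 1 u ^ 3 := by
  induction n with
  | zero => simp
  | succ n ih =>
    simp only [coeff_pow_succ, Nat.reduceAdd, sum_range_succ, range_one, sum_singleton,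
      coeff_zero_eq_constantCoeff, map_pow, hu, one_pow, tsub_zero, one_mul,
      coeff_one_pow_of_constantCoeff_eq_one hu, Nat.add_one_sub_one,
      coeff_two_pow_of_constantCoeff_eq_one hu, Nat.reduceSub, ih, tsub_self, mul_one,
      Nat.cast_add, Nat.cast_one, Nat.choose_succ_succ', Nat.choose_one_right]
    ring

end ConstantCoeffOne

lemma coeff_add_pow_of_constantCoeff_eq_zero {φ : R⟦X⟧} (hφ : constantCoeff φ = 0) (n k : ℕ) :
    coeff (n + k) (φ ^ n) = coeff k ((mk fun p => coeff (p + 1) φ) ^ n) := by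
  conv_lhs => rw [eq_X_mul_shift_add_const φ, hφ, map_zero, add_zero, mul_pow, coeff_X_pow_mul']
  simp

end PowerSeries

lemma Nat.cast_choose_three {K : Type*} [Field K] [CharZero K] (n : ℕ) :
    (n.choose 3 : K) = n * (n - 1) * (n - 2) / 6 := by
  induction n with
  | zero => simp
  | succ n ih =>
    rw [Nat.choose_succ_succ', Nat.cast_add, ih, Nat.cast_choose_two]
    push_cast
    ring

lemma constantCoeff_hypFsub1 (L : ℕ) : constantCoeff (hypFsub1 L) = 0 := by
  simp [hypFsub1]

lemma coeff_hypFsub1 (L : ℕ) {k : ℕ} (hk : k ≠ 0) :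
    coeff k (hypFsub1 L) = 1 / (k.factorial : ℚ) ^ (L + 1) := by
  simp [hypFsub1, hk]

lemma SL_add_three_self (L n : ℕ) :
    SL L (n + 3) n =
      ((n + 3).factorial : ℚ) ^ (L + 1) / n.factorial *
        (n / 24 ^ (L + 1) + 2 * n.choose 2 / (2 ^ (L + 1) * 6 ^ (L + 1)) +
          n.choose 3 / (2 ^ (L + 1)) ^ 3) := by
  set u : ℚ⟦X⟧ := mk fun p => coeff (p + 1) (hypFsub1 L)
  have hu : constantCoeff u = 1 := by simp [u, coeff_hypFsub1]
  have hcoeff (k : ℕ) : coeff k u = 1 / ((k + 1).factorial : ℚ) ^ (L + 1) := by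
    simp only [u, coeff_mk, coeff_hypFsub1 L k.succ_ne_zero]
  rw [SL, coeff_add_pow_of_constantCoeff_eq_zero (constantCoeff_hypFsub1 L),
    coeff_three_pow_of_constantCoeff_eq_one hu, hcoeff, hcoeff, hcoeff]
  congr 1
  simp only [Nat.factorial, Nat.succ_eq_add_one, Nat.reduceAdd, zero_add, mul_one, Nat.reduceMul,
    Nat.cast_ofNat]
  ring

/-- `S_L(n+3,n) = (n(n+1)(n+2)(n+3)/48) · ((n+3)!/3)^L ·
  (n²(3/8)^L + n(1/4^{L−1} − 3^{L+1}/8^L) + (2 + 2·3^L)/8^L − 1/4^{L−1})`,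
where `4^{L−1}` is the integer power `(4 : ℚ)^((L : ℤ) − 1)`. -/
theorem stmt_13 (L n : ℕ) :
    SL L (n + 3) n =
      ((n : ℚ) * ((n : ℚ) + 1) * ((n : ℚ) + 2) * ((n : ℚ) + 3) / 48) *
        (((n + 3).factorial : ℚ) / 3) ^ L *
        ((n : ℚ) ^ 2 * ((3 : ℚ) / 8) ^ L +
          (n : ℚ) * (1 / (4 : ℚ) ^ ((L : ℤ) - 1) - (3 : ℚ) ^ (L + 1) / 8 ^ L) +
          (2 + 2 * (3 : ℚ) ^ L) / 8 ^ L - 1 / (4 : ℚ) ^ ((L : ℤ) - 1)) := by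
  have hfac : ((n + 3).factorial : ℚ) = (n + 1) * (n + 2) * (n + 3) * n.factorial := by
    push_cast [Nat.factorial_succ]
    ring
  have h4 : (4 : ℚ) ^ L = (2 ^ L) ^ 2 := by rw [← pow_mul, mul_comm, pow_mul]; norm_num
  have h8 : (8 : ℚ) ^ L = (2 ^ L) ^ 3 := by rw [← pow_mul, mul_comm, pow_mul]; norm_num
  have h6 : (6 : ℚ) ^ L = 2 ^ L * 3 ^ L := by rw [← mul_pow]; norm_num
  have h24 : (24 : ℚ) ^ L = (2 ^ L) ^ 3 * 3 ^ L := by rw [← h8, ← mul_pow]; norm_num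
  rw [SL_add_three_self, Nat.cast_choose_two, Nat.cast_choose_three, hfac,
    zpow_sub_one₀ four_ne_zero, zpow_natCast, h4, div_pow (3 : ℚ), div_pow _ (3 : ℚ), h8]
  simp only [pow_succ, h6, h24]
  field_simp
  ring
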